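/- arXiv:2405.04091 — 6 statements merged into one kernel-verified Lean document; each statement's English description precedes it below -/
import Mathlib

section
/- If m < n, then for any matrices A, B ∈ R^{m×n}, the map F(x) = A x − B|x| is not injective; in particular there exists b ∈ R^m such that the equation A x − B|x| = b admits infinitely many solutions. -/
open Matrix

/-- If `m < n`, then for any `A, B ∈ ℝ^{m×n}` the map `x ↦ A x − B |x|` is not injective;
in particular, there is a right-hand side `b` for which `A x − B |x| = b` has infinitely
many solutions. -/
theorem gave_not_injective_of_lt {m n : ℕ} (hmn : m < n) (A B : Matrix (Fin m) (Fin n) ℝ) :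
    ¬ Function.Injective (fun x : Fin n → ℝ => A.mulVec x - B.mulVec (fun j => |x j|)) ∧
      ∃ b : Fin m → ℝ,
        {x : Fin n → ℝ | A.mulVec x - B.mulVec (fun j => |x j|) = b}.Infinite := by
  set C := A - B with hC
  -- there is a nonzero vector in the kernel of C
  obtain ⟨v, hv0, hvker⟩ : ∃ v : Fin n → ℝ, v ≠ 0 ∧ C.mulVec v = 0 := by
    by_contra h
    push_neg at h
    have hinj : Function.Injective C.mulVecLin := by
      rw [← LinearMap.ker_eq_bot]
      ext v
      simp only [LinearMap.mem_ker, Submodule.mem_bot, Matrix.mulVecLin_apply]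
      constructor
      · intro hv
        by_contra hv0
        exact h v hv0 hv
      · intro hv; subst hv; simp
    have := LinearMap.finrank_le_finrank_of_injective hinj
    simp [Module.finrank_pi] at this
    omega
  -- the family of solutions
  set x : ℝ → (Fin n → ℝ) := fun t j => |v j| + t * v j with hx
  have hxnn : ∀ t ∈ Set.Icc (0:ℝ) 1, ∀ j, 0 ≤ x t j := by
    intro t ht j
    have h1 : |t * v j| ≤ |v j| := by
      rw [abs_mul]
      calc |t| * |v j| ≤ 1 * |v j| := by
            apply mul_le_mul_of_nonneg_right _ (abs_nonneg _)
            rw [abs_le]; constructor <;> [linarith [ht.1]; exact ht.2]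
        _ = |v j| := one_mul _
    have := neg_abs_le (t * v j)
    simp only [hx]
    linarith
  have hF : ∀ t ∈ Set.Icc (0:ℝ) 1,
      A.mulVec (x t) - B.mulVec (fun j => |x t j|) = C.mulVec (fun j => |v j|) := by
    intro t ht
    have habs : (fun j => |x t j|) = x t := by
      funext j; exact abs_of_nonneg (hxnn t ht j)
    rw [habs]
    have h1 : A.mulVec (x t) - B.mulVec (x t) = C.mulVec (x t) := by
      simp [hC, Matrix.sub_mulVec]
    rw [h1]
    have h2 : x t = (fun j => |v j|) + t • v := by
      funext j; simp [hx, smul_eq_mul]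
    rw [h2, Matrix.mulVec_add, Matrix.mulVec_smul, hvker]
    simp
  -- pick a coordinate where v is nonzero
  obtain ⟨j0, hj0⟩ : ∃ j, v j ≠ 0 := by
    by_contra h
    push_neg at h
    exact hv0 (funext h)
  have hxinj : ∀ s ∈ Set.Icc (0:ℝ) 1, ∀ t ∈ Set.Icc (0:ℝ) 1, x s = x t → s = t := by
    intro s _ t _ hst
    have := congrFun hst j0
    simp only [hx] at this
    have : s * v j0 = t * v j0 := by linarith
    exact mul_right_cancel₀ hj0 this
  constructor
  · intro hinj
    have h0 : (0:ℝ) ∈ Set.Icc (0:ℝ) 1 := by norm_num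
    have h1 : (1:ℝ) ∈ Set.Icc (0:ℝ) 1 := by norm_num
    have heq : (fun x => A *ᵥ x - B *ᵥ fun j => |x j|) (x 0)
        = (fun x => A *ᵥ x - B *ᵥ fun j => |x j|) (x 1) := by
      simp only
      rw [hF 0 h0, hF 1 h1]
    have := hxinj 0 h0 1 h1 (hinj heq)
    norm_num at this
  · refine ⟨C.mulVec (fun j => |v j|), ?_⟩
    have : (Set.Icc (0:ℝ) 1).Infinite := Set.Icc_infinite zero_lt_one
    haveI := this.to_subtype
    exact Set.infinite_of_injective_forall_mem
      (f := fun t : Set.Icc (0:ℝ) 1 => x t.1)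
      (fun s t hst => Subtype.ext (hxinj s.1 s.2 t.1 t.2 hst))
      (fun t => hF t.1 t.2)
end

section
/- The generalized absolute value equation A x − B|x| = b has a unique solution for every right-hand side b ∈ R^m if and only if m = n and the matrix A + B D is nonsingular for every diagonal matrix D with diagonal entries in [−1,1]. -/
open Matrix

namespace GaveAux

variable {n : ℕ}

/-- Difference of two GAVE-type maps is a linear interval-matrix action. -/
lemma diff_rep (A B : Matrix (Fin n) (Fin n) ℝ) (g : Fin n → ℝ → ℝ)
    (hg : ∀ j a b, |g j a - g j b| ≤ |a - b|) (u v : Fin n → ℝ) :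
    ∃ d : Fin n → ℝ, (∀ i, |d i| ≤ 1) ∧
      (A.mulVec u - B.mulVec (fun j => g j (u j))) -
        (A.mulVec v - B.mulVec (fun j => g j (v j)))
        = (A + B * diagonal d).mulVec (u - v) := by
  classical
  set d : Fin n → ℝ := fun j =>
    if u j = v j then 0 else -((g j (u j) - g j (v j)) / (u j - v j)) with hd
  have key : ∀ j, d j * (u j - v j) = -(g j (u j) - g j (v j)) := by
    intro j
    by_cases hj : u j = v j
    · have h0 : |g j (u j) - g j (v j)| ≤ 0 :=
        le_of_le_of_eq (hg j (u j) (v j)) (by rw [hj, sub_self, abs_zero])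
      have h1 : g j (u j) - g j (v j) = 0 :=
        abs_eq_zero.mp (le_antisymm h0 (abs_nonneg _))
      simp [hd, hj, h1]
    · have hne : u j - v j ≠ 0 := sub_ne_zero.mpr hj
      simp only [hd, if_neg hj]
      field_simp
  have hbd : ∀ i, |d i| ≤ 1 := by
    intro j
    by_cases hj : u j = v j
    · simp [hd, hj]
    · have hne : u j - v j ≠ 0 := sub_ne_zero.mpr hj
      simp only [hd, if_neg hj, abs_neg, abs_div]
      rw [div_le_one (abs_pos.mpr hne)]
      exact hg j (u j) (v j)
  refine ⟨d, hbd, ?_⟩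
  funext i
  simp only [mulVec, dotProduct, Pi.sub_apply, Matrix.add_apply, Matrix.mul_diagonal]
  have hj : ∀ j ∈ Finset.univ, (A i j + B i j * d j) * (u j - v j)
      = (A i j * u j - B i j * g j (u j)) - (A i j * v j - B i j * g j (v j)) := by
    intro j _
    linear_combination (B i j) * key j
  rw [Finset.sum_congr rfl hj, Finset.sum_sub_distrib, Finset.sum_sub_distrib,
    Finset.sum_sub_distrib]

/-- Uniform coercivity over the box, by compactness. -/
lemma coercive (A B : Matrix (Fin n) (Fin n) ℝ)
    (H : ∀ d : Fin n → ℝ, (∀ i, |d i| ≤ 1) →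
      Function.Injective ((A + B * diagonal d).mulVec)) :
    ∃ c : ℝ, 0 < c ∧ ∀ d : Fin n → ℝ, (∀ i, |d i| ≤ 1) → ∀ w : Fin n → ℝ,
      c * ‖w‖ ≤ ‖(A + B * diagonal d).mulVec w‖ := by
  classical
  rcases Nat.eq_zero_or_pos n with hn | hn
  · subst hn
    refine ⟨1, one_pos, ?_⟩
    intro d _ w
    have hw : w = 0 := funext fun i => i.elim0
    simp [hw]
  · haveI hne : Nonempty (Fin n) := ⟨⟨0, hn⟩⟩
    set K : Set ((Fin n → ℝ) × (Fin n → ℝ)) :=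
      {d : Fin n → ℝ | ∀ i, |d i| ≤ 1} ×ˢ Metric.sphere (0 : Fin n → ℝ) 1 with hK
    have hKc : IsCompact K := by
      apply IsCompact.prod
      · have : {d : Fin n → ℝ | ∀ i, |d i| ≤ 1}
            = Set.pi Set.univ (fun _ : Fin n => Set.Icc (-1 : ℝ) 1) := by
          ext p
          simp only [Set.mem_setOf_eq, Set.mem_pi, Set.mem_univ, forall_true_left,
            Set.mem_Icc, abs_le, true_implies]
        rw [this]
        exact isCompact_univ_pi fun _ => isCompact_Icc
      · exact isCompact_sphere 0 1
    have hKne : K.Nonempty := by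
      obtain ⟨w1, hw1⟩ : (Metric.sphere (0 : Fin n → ℝ) 1).Nonempty :=
        NormedSpace.sphere_nonempty.mpr zero_le_one
      exact ⟨(0, w1), ⟨fun i => by simp, hw1⟩⟩
    have hcont : Continuous fun p : (Fin n → ℝ) × (Fin n → ℝ) =>
        ‖(A + B * diagonal p.1).mulVec p.2‖ := by
      apply Continuous.norm
      apply continuous_pi
      intro i
      have : (fun p : (Fin n → ℝ) × (Fin n → ℝ) => (A + B * diagonal p.1).mulVec p.2 i)
          = fun p => ∑ j, (A i j + B i j * p.1 j) * p.2 j := by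
        funext p
        simp [mulVec, dotProduct, Matrix.mul_diagonal]
      rw [this]
      apply continuous_finset_sum
      intro j _
      fun_prop
    obtain ⟨p0, hp0K, hmin⟩ := hKc.exists_isMinOn hKne hcont.continuousOn
    set c := ‖(A + B * diagonal p0.1).mulVec p0.2‖ with hc
    have hcpos : 0 < c := by
      rw [hc, norm_pos_iff]
      intro h0
      have hinj := H p0.1 hp0K.1
      have : p0.2 = 0 := by
        apply hinj
        rw [h0, Matrix.mulVec_zero]
      have h2 : ‖p0.2‖ = 1 := by
        have := hp0K.2
        simpa [dist_zero_right] using this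
      rw [this] at h2
      simp at h2
    refine ⟨c, hcpos, ?_⟩
    intro d hd w
    rcases eq_or_ne w 0 with rfl | hw
    · simp
    · have hwn : (0:ℝ) < ‖w‖ := norm_pos_iff.mpr hw
      set w' : Fin n → ℝ := ‖w‖⁻¹ • w with hw'
      have hw'1 : w' ∈ Metric.sphere (0 : Fin n → ℝ) 1 := by
        simp only [hw', Metric.mem_sphere, dist_zero_right, norm_smul, norm_inv,
          norm_norm]
        field_simp
      have hmem : (d, w') ∈ K := ⟨hd, hw'1⟩
      have hle := hmin hmem
      simp only [Set.mem_setOf_eq] at hle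
      have heq : (A + B * diagonal d).mulVec w' = ‖w‖⁻¹ • (A + B * diagonal d).mulVec w := by
        rw [hw']
        exact Matrix.mulVec_smul _ _ _
      rw [heq, norm_smul, norm_inv, norm_norm] at hle
      calc c * ‖w‖ ≤ (‖w‖⁻¹ * ‖(A + B * diagonal d).mulVec w‖) * ‖w‖ := by
            exact mul_le_mul_of_nonneg_right hle hwn.le
        _ = ‖(A + B * diagonal d).mulVec w‖ := by field_simp


/-- mixed map g data: abs on S, linear slope t off S -/
private def mg (S : Finset (Fin n)) (t : Fin n → ℝ) : Fin n → ℝ → ℝ :=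
  fun j a => if j ∈ S then |a| else t j * a

lemma mg_lip (S : Finset (Fin n)) (t : Fin n → ℝ) (ht : ∀ i, |t i| ≤ 1) :
    ∀ j a b, |mg S t j a - mg S t j b| ≤ |a - b| := by
  intro j a b
  unfold mg
  by_cases hj : j ∈ S
  · simp only [if_pos hj]
    exact abs_abs_sub_abs_le_abs_sub a b
  · simp only [if_neg hj, ← mul_sub, abs_mul]
    calc |t j| * |a - b| ≤ 1 * |a - b| :=
        mul_le_mul_of_nonneg_right (ht j) (abs_nonneg _)
      _ = |a - b| := one_mul _

lemma mg_zero (S : Finset (Fin n)) (t : Fin n → ℝ) (j : Fin n) : mg S t j 0 = 0 := by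
  unfold mg; split <;> simp

lemma exists_solution (A B : Matrix (Fin n) (Fin n) ℝ)
    (H : ∀ d : Fin n → ℝ, (∀ i, |d i| ≤ 1) →
      Function.Bijective ((A + B * diagonal d).mulVec)) (S : Finset (Fin n)) :
    ∀ t : Fin n → ℝ, (∀ i, |t i| ≤ 1) → ∀ b : Fin n → ℝ,
      ∃ x : Fin n → ℝ, A.mulVec x - B.mulVec (fun j => mg S t j (x j)) = b := by
  classical
  obtain ⟨c, hc, hcoer⟩ := coercive A B (fun d hd => (H d hd).injective)
  induction S using Finset.induction_on with
  | empty =>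
    intro t ht b
    have hbd : ∀ i, |(fun j => -t j) i| ≤ 1 := by
      intro i; simpa using ht i
    obtain ⟨x, hx⟩ := (H _ hbd).surjective b
    refine ⟨x, ?_⟩
    have h1 : (fun j => mg (∅ : Finset (Fin n)) t j (x j)) = diagonal t *ᵥ x := by
      funext j
      rw [Matrix.mulVec_diagonal]
      simp [mg]
    have h2 : (A + B * diagonal fun j => -t j) = A - B * diagonal t := by
      have h3 : (diagonal fun j => -t j) = -diagonal t := by
        rw [← Matrix.diagonal_neg]
      rw [h3, mul_neg, ← sub_eq_add_neg]
    rw [h1, Matrix.mulVec_mulVec, ← Matrix.sub_mulVec, ← h2, hx]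
  | @insert i S hiS IH =>
    intro t ht b
    have hub : ∀ τ : ℝ, |τ| ≤ 1 → ∀ i', |Function.update t i τ i'| ≤ 1 := by
      intro τ hτ i'
      rcases eq_or_ne i' i with rfl | hne
      · simpa using hτ
      · simpa [Function.update_apply, hne] using ht i'
    set y : ℝ → (Fin n → ℝ) := fun τ =>
      if h : |τ| ≤ 1 then Classical.choose (IH (Function.update t i τ) (hub τ h) b) else 0
      with hy
    have hysol : ∀ τ, (h : |τ| ≤ 1) →
        A.mulVec (y τ) - B.mulVec (fun j => mg S (Function.update t i τ) j (y τ j)) = b := by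
      intro τ h
      rw [hy]; simp only [dif_pos h]
      exact Classical.choose_spec (IH (Function.update t i τ) (hub τ h) b)
    have key : ∀ τ, |τ| ≤ 1 → ∀ u v : Fin n → ℝ,
        c * ‖u - v‖ ≤
          ‖(A.mulVec u - B.mulVec (fun j => mg S (Function.update t i τ) j (u j))) -
            (A.mulVec v - B.mulVec (fun j => mg S (Function.update t i τ) j (v j)))‖ := by
      intro τ h u v
      obtain ⟨d, hd, heq⟩ := diff_rep A B _ (mg_lip S _ (hub τ h)) u v
      rw [heq]; exact hcoer d hd _
    have hFzero : ∀ τ : ℝ,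
        A.mulVec (0 : Fin n → ℝ)
          - B.mulVec (fun j => mg S (Function.update t i τ) j ((0 : Fin n → ℝ) j)) = 0 := by
      intro τ
      have h0 : (fun j => mg S (Function.update t i τ) j ((0 : Fin n → ℝ) j))
          = (0 : Fin n → ℝ) := funext fun j => mg_zero _ _ _
      rw [h0]
      simp
    have hynorm : ∀ τ, (h : |τ| ≤ 1) → c * ‖y τ‖ ≤ ‖b‖ := by
      intro τ h
      have h1 := key τ h (y τ) 0
      rw [hFzero τ, sub_zero, sub_zero, hysol τ h] at h1
      exact h1
    set Mi : ℝ := ‖B.mulVec (Pi.single i 1)‖ with hMi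
    have hdelta : ∀ τ σ : ℝ, ∀ x : Fin n → ℝ,
        (A.mulVec x - B.mulVec (fun j => mg S (Function.update t i τ) j (x j))) -
          (A.mulVec x - B.mulVec (fun j => mg S (Function.update t i σ) j (x j)))
          = ((σ - τ) * x i) • B.mulVec (Pi.single i 1) := by
      intro τ σ x
      have h1 : (fun j => mg S (Function.update t i σ) j (x j))
          - (fun j => mg S (Function.update t i τ) j (x j))
          = Pi.single i ((σ - τ) * x i) := by
        funext j
        rcases eq_or_ne j i with rfl | hji
        · simp only [Pi.sub_apply, mg, if_neg hiS, Function.update_self,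
            Pi.single_eq_same]
          ring
        · simp only [Pi.sub_apply, mg, Function.update_of_ne hji,
            Pi.single_eq_of_ne hji]
          split <;> ring
      have h2 : (Pi.single i ((σ - τ) * x i) : Fin n → ℝ)
          = ((σ - τ) * x i) • (Pi.single i 1 : Fin n → ℝ) := by
        funext j
        rcases eq_or_ne j i with rfl | hji
        · simp
        · simp [Pi.single_eq_of_ne hji]
      calc (A.mulVec x - B.mulVec fun j => mg S (Function.update t i τ) j (x j)) -
            (A.mulVec x - B.mulVec fun j => mg S (Function.update t i σ) j (x j))
          = B.mulVec ((fun j => mg S (Function.update t i σ) j (x j)) -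
              (fun j => mg S (Function.update t i τ) j (x j))) := by
            rw [Matrix.mulVec_sub]; abel
        _ = B.mulVec (Pi.single i ((σ - τ) * x i)) := by rw [h1]
        _ = ((σ - τ) * x i) • B.mulVec (Pi.single i 1) := by
            rw [h2, Matrix.mulVec_smul]
    have hMi0 : 0 ≤ Mi := norm_nonneg _
    have hLip : ∀ τ σ : ℝ, |τ| ≤ 1 → |σ| ≤ 1 →
        c * ‖y τ - y σ‖ ≤ |τ - σ| * (‖y σ‖ * Mi) := by
      intro τ σ hτ hσ
      have h1 := key τ hτ (y τ) (y σ)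
      have hd := hdelta τ σ (y σ)
      have hs := hysol σ hσ
      have ht' := hysol τ hτ
      rw [ht'] at h1
      have h3 : (A.mulVec (y σ) - B.mulVec fun j => mg S (Function.update t i τ) j (y σ j))
          = b + ((σ - τ) * y σ i) • B.mulVec (Pi.single i 1) := by
        have h4 := sub_eq_iff_eq_add.mp hd
        rw [h4, hs]
        abel
      rw [h3] at h1
      have h5 : b - (b + ((σ - τ) * y σ i) • B.mulVec (Pi.single i 1))
          = -(((σ - τ) * y σ i) • B.mulVec (Pi.single i 1)) := by abel
      rw [h5, norm_neg, norm_smul, Real.norm_eq_abs, abs_mul] at h1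
      have h6 : |y σ i| ≤ ‖y σ‖ := by
        have := norm_le_pi_norm (y σ) i
        simpa [Real.norm_eq_abs] using this
      calc c * ‖y τ - y σ‖ ≤ |σ - τ| * |y σ i| * Mi := h1
        _ = |τ - σ| * (|y σ i| * Mi) := by rw [abs_sub_comm]; ring
        _ ≤ |τ - σ| * (‖y σ‖ * Mi) := by
            apply mul_le_mul_of_nonneg_left _ (abs_nonneg _)
            exact mul_le_mul_of_nonneg_right h6 hMi0
    have hbnorm : ∀ σ : ℝ, |σ| ≤ 1 → ‖y σ‖ ≤ c⁻¹ * ‖b‖ := by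
      intro σ hσ
      have h1 := hynorm σ hσ
      calc ‖y σ‖ = c⁻¹ * (c * ‖y σ‖) := by field_simp
        _ ≤ c⁻¹ * ‖b‖ := mul_le_mul_of_nonneg_left h1 (by positivity)
    set L : ℝ := c⁻¹ * (c⁻¹ * ‖b‖ * Mi) with hLdef
    have hL : 0 ≤ L := by positivity
    have hφlip : ∀ τ σ : ℝ, |τ| ≤ 1 → |σ| ≤ 1 → |y τ i - y σ i| ≤ L * |τ - σ| := by
      intro τ σ hτ hσ
      have h6 : |y τ i - y σ i| ≤ ‖y τ - y σ‖ := by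
        have := norm_le_pi_norm (y τ - y σ) i
        simpa [Real.norm_eq_abs] using this
      have s1 : ‖y τ - y σ‖ ≤ c⁻¹ * (|τ - σ| * (‖y σ‖ * Mi)) := by
        have h7 := hLip τ σ hτ hσ
        calc ‖y τ - y σ‖ = c⁻¹ * (c * ‖y τ - y σ‖) := by field_simp
          _ ≤ c⁻¹ * (|τ - σ| * (‖y σ‖ * Mi)) :=
              mul_le_mul_of_nonneg_left h7 (by positivity)
      have s2 : |τ - σ| * (‖y σ‖ * Mi) ≤ |τ - σ| * ((c⁻¹ * ‖b‖) * Mi) := by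
        apply mul_le_mul_of_nonneg_left _ (abs_nonneg _)
        exact mul_le_mul_of_nonneg_right (hbnorm σ hσ) hMi0
      calc |y τ i - y σ i| ≤ ‖y τ - y σ‖ := h6
        _ ≤ c⁻¹ * (|τ - σ| * (‖y σ‖ * Mi)) := s1
        _ ≤ c⁻¹ * (|τ - σ| * ((c⁻¹ * ‖b‖) * Mi)) :=
            mul_le_mul_of_nonneg_left s2 (by positivity)
        _ = L * |τ - σ| := by rw [hLdef]; ring
    have hφcont : ContinuousOn (fun τ => y τ i) (Set.Icc (-1 : ℝ) 1) := by
      apply LipschitzOnWith.continuousOn (K := Real.toNNReal L)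
      rw [lipschitzOnWith_iff_dist_le_mul]
      intro τ hτ σ hσ
      rw [Real.dist_eq, Real.dist_eq]
      calc |y τ i - y σ i| ≤ L * |τ - σ| :=
            hφlip τ σ (abs_le.mpr ⟨hτ.1, hτ.2⟩) (abs_le.mpr ⟨hσ.1, hσ.2⟩)
        _ = (Real.toNNReal L : ℝ) * |τ - σ| := by rw [Real.coe_toNNReal L hL]
    have hconv : ∀ τ : ℝ, ∀ x : Fin n → ℝ, |x i| = τ * x i →
        (fun j => mg (insert i S) t j (x j))
          = fun j => mg S (Function.update t i τ) j (x j) := by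
      intro τ x hx
      funext j
      rcases eq_or_ne j i with rfl | hji
      · simp only [mg, Finset.mem_insert_self, if_pos, if_neg hiS, Function.update_self]
        exact hx
      · have hmem : (j ∈ insert i S) = (j ∈ S) := by
          simp [Finset.mem_insert, hji]
        simp only [mg, hmem, Function.update_of_ne hji]
    rcases le_or_gt 0 (y 1 i) with hpos | hneg
    · refine ⟨y 1, ?_⟩
      rw [hconv 1 (y 1) (by rw [abs_of_nonneg hpos, one_mul])]
      exact hysol 1 (by norm_num)
    rcases le_or_gt (y (-1) i) 0 with hneg2 | hpos2
    · refine ⟨y (-1), ?_⟩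
      rw [hconv (-1) (y (-1)) (by rw [abs_of_nonpos hneg2]; ring)]
      exact hysol (-1) (by norm_num)
    · have hsub := intermediate_value_Icc' (by norm_num : (-1 : ℝ) ≤ 1) hφcont
      have h0mem : (0 : ℝ) ∈ Set.Icc (y 1 i) (y (-1) i) := ⟨hneg.le, hpos2.le⟩
      obtain ⟨τ0, hτ0mem, hτ0⟩ := hsub h0mem
      have hτ0b : |τ0| ≤ 1 := abs_le.mpr ⟨hτ0mem.1, hτ0mem.2⟩
      refine ⟨y τ0, ?_⟩
      have hzero : y τ0 i = 0 := hτ0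
      rw [hconv τ0 (y τ0) (by rw [hzero]; simp)]
      exact hysol τ0 hτ0b


/-- Unique solvability forces injectivity of every interval matrix. -/
lemma forward_inj (A B : Matrix (Fin m) (Fin n) ℝ)
    (h : ∀ b : Fin m → ℝ, ∃! x : Fin n → ℝ, A.mulVec x - B.mulVec (fun j => |x j|) = b)
    (d : Fin n → ℝ) (hd : ∀ i, |d i| ≤ 1) :
    Function.Injective ((A + B * diagonal d).mulVec) := by
  intro u₁ u₂ h12
  by_contra hne
  set u : Fin n → ℝ := u₁ - u₂ with hu
  have hu0 : (A + B * diagonal d).mulVec u = 0 := by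
    rw [hu, Matrix.mulVec_sub, h12, sub_self]
  have habs : ∀ j, |(u j - d j * |u j|) / 2| - |(-u j - d j * |u j|) / 2| = -(d j * u j) := by
    intro j
    obtain ⟨hd1, hd2⟩ := abs_le.mp (hd j)
    have h1d : (0:ℝ) ≤ 1 + d j := by linarith
    have h2d : (0:ℝ) ≤ 1 - d j := by linarith
    rcases le_or_gt 0 (u j) with h0 | h0
    · have hx1 : (0:ℝ) ≤ (u j - d j * u j) / 2 := by nlinarith [mul_nonneg h2d h0]
      have hy1 : (-u j - d j * u j) / 2 ≤ 0 := by nlinarith [mul_nonneg h1d h0]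
      rw [abs_of_nonneg h0, abs_of_nonneg hx1, abs_of_nonpos hy1]
      ring
    · have hnu : (0:ℝ) ≤ -u j := by linarith
      have hx1 : (u j - d j * -u j) / 2 ≤ 0 := by nlinarith [mul_nonneg h1d hnu]
      have hy1 : (0:ℝ) ≤ (-u j - d j * -u j) / 2 := by nlinarith [mul_nonneg h2d hnu]
      rw [abs_of_neg h0, abs_of_nonpos hx1, abs_of_nonneg hy1]
      ring
  set xf : Fin n → ℝ := fun j => (u j - d j * |u j|) / 2 with hxf
  set yf : Fin n → ℝ := fun j => (-u j - d j * |u j|) / 2 with hyf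
  have e1 : xf - yf = u := by
    funext j
    simp only [hxf, hyf, Pi.sub_apply]
    ring
  have e2 : (fun j => |xf j|) - (fun j => |yf j|) = fun j => -(d j * u j) := by
    funext j
    simp only [hxf, hyf, Pi.sub_apply]
    exact habs j
  have hFdiff : (A.mulVec xf - B.mulVec (fun j => |xf j|)) -
      (A.mulVec yf - B.mulVec (fun j => |yf j|)) = 0 := by
    have e3 : (A.mulVec xf - B.mulVec (fun j => |xf j|)) -
        (A.mulVec yf - B.mulVec (fun j => |yf j|))
        = A.mulVec (xf - yf) - B.mulVec ((fun j => |xf j|) - (fun j => |yf j|)) := by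
      rw [Matrix.mulVec_sub, Matrix.mulVec_sub]
      abel
    rw [e3, e1, e2]
    have e4 : (fun j => -(d j * u j)) = -(diagonal d *ᵥ u) := by
      funext j
      simp [Matrix.mulVec_diagonal]
    rw [e4, Matrix.mulVec_neg, sub_neg_eq_add, Matrix.mulVec_mulVec,
      ← Matrix.add_mulVec]
    exact hu0
  obtain ⟨w, _, huniq⟩ := h (A.mulVec xf - B.mulVec (fun j => |xf j|))
  have hx : xf = w := huniq xf rfl
  have hy : yf = w := huniq yf (sub_eq_zero.mp hFdiff).symm
  have hueq : u = 0 := by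
    funext j
    have := congrFun (hx.trans hy.symm) j
    simp only [hxf, hyf] at this
    have h9 : u j - d j * |u j| = -u j - d j * |u j| := by linarith
    show u j = (0:ℝ)
    linarith
  exact hne (sub_eq_zero.mp (hu ▸ hueq))


/-- Unique solvability forces the matrix to be square. -/
lemma dims_eq (A B : Matrix (Fin m) (Fin n) ℝ)
    (h : ∀ b : Fin m → ℝ, ∃! x : Fin n → ℝ, A.mulVec x - B.mulVec (fun j => |x j|) = b) :
    m = n := by
  classical
  -- n ≤ m from injectivity of A
  have hAinj : Function.Injective (A.mulVec) := by
    have h0 := forward_inj A B h (fun _ => 0) (by intro i; simp)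
    simpa [Matrix.diagonal_zero, Matrix.mul_zero, add_zero] using h0
  have hnm : n ≤ m := by
    have hinj : Function.Injective ⇑(A.mulVecLin) := by
      intro a b hab
      exact hAinj (by simpa [Matrix.mulVecLin_apply] using hab)
    have := LinearMap.finrank_le_finrank_of_injective hinj
    simpa [Module.finrank_fin_fun] using this
  -- m ≤ n by Baire category
  have hmn : m ≤ n := by
    by_contra hlt
    push_neg at hlt
    set V : (Fin n → Bool) → Submodule ℝ (Fin m → ℝ) := fun s =>
      LinearMap.range ((A + B * diagonal (fun j => if s j then (-1:ℝ) else 1)).mulVecLin)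
      with hV
    have hcover : (⋃ s, (V s : Set (Fin m → ℝ))) = Set.univ := by
      ext b
      simp only [Set.mem_iUnion, Set.mem_univ, iff_true, SetLike.mem_coe]
      obtain ⟨x, hx, -⟩ := h b
      refine ⟨fun j => decide (0 ≤ x j), ?_⟩
      rw [LinearMap.mem_range]
      refine ⟨x, ?_⟩
      rw [Matrix.mulVecLin_apply, Matrix.add_mulVec, ← Matrix.mulVec_mulVec]
      have hdiag : diagonal (fun j => if decide (0 ≤ x j) then (-1:ℝ) else 1) *ᵥ x
          = fun j => -|x j| := by
        funext j
        rw [Matrix.mulVec_diagonal]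
        rcases le_or_gt 0 (x j) with h0 | h0
        · simp [h0, abs_of_nonneg h0]
        · simp [not_le.mpr h0, abs_of_neg h0]
      rw [hdiag]
      have hneg : (fun j => -|x j|) = -(fun j => |x j|) := rfl
      rw [hneg, Matrix.mulVec_neg, ← sub_eq_add_neg]
      exact hx
    obtain ⟨s, hs⟩ := nonempty_interior_of_iUnion_of_closed
      (fun s => (V s).closed_of_finiteDimensional) hcover
    have htop : V s = ⊤ := Submodule.eq_top_of_nonempty_interior' _ hs
    have h2 := LinearMap.finrank_range_le
      ((A + B * diagonal (fun j => if s j then (-1:ℝ) else 1)).mulVecLin)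
    rw [show LinearMap.range ((A + B * diagonal
        (fun j => if s j then (-1:ℝ) else 1)).mulVecLin) = V s from rfl, htop] at h2
    rw [finrank_top] at h2
    simp only [Module.finrank_fin_fun] at h2
    omega
  omega

end GaveAux



open GaveAux in
/-- The GAVE `A x − B|x| = b` has a unique solution for every `b ∈ ℝ^m` iff `m = n` and
`A + B D` is nonsingular for every diagonal matrix `D` with entries in `[−1,1]`. -/
theorem gave_unique_solvability_iff {m n : ℕ} (A B : Matrix (Fin m) (Fin n) ℝ) :
    (∀ b : Fin m → ℝ, ∃! x : Fin n → ℝ, A.mulVec x - B.mulVec (fun j => |x j|) = b) ↔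
      (m = n ∧ ∀ d : Fin n → ℝ, (∀ i, |d i| ≤ 1) →
        Function.Bijective ((A + B * Matrix.diagonal d).mulVec)) := by
  constructor
  · intro h
    have hmn : m = n := GaveAux.dims_eq A B h
    refine ⟨hmn, ?_⟩
    subst hmn
    intro d hd
    have hinj := GaveAux.forward_inj A B h d hd
    have hlin : Function.Injective ⇑((A + B * diagonal d).mulVecLin) := by
      intro a b hab
      exact hinj (by simpa only [Matrix.mulVecLin_apply] using hab)
    have hsurj := (LinearMap.injective_iff_surjective).mp hlin
    refine ⟨hinj, fun b => ?_⟩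
    obtain ⟨x, hx⟩ := hsurj b
    exact ⟨x, by simpa only [Matrix.mulVecLin_apply] using hx⟩
  · rintro ⟨hmn, H⟩
    subst hmn
    intro b
    obtain ⟨x, hx⟩ := GaveAux.exists_solution A B H Finset.univ (fun _ => 0)
      (by intro i; simp) b
    have hx' : A.mulVec x - B.mulVec (fun j => |x j|) = b := by
      have hmg : (fun j => GaveAux.mg Finset.univ (fun _ => (0:ℝ)) j (x j))
          = fun j => |x j| := by
        funext j
        simp [GaveAux.mg]
      rwa [hmg] at hx
    refine ⟨x, hx', fun z hz => ?_⟩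
    obtain ⟨d, hd, heq⟩ := GaveAux.diff_rep A B (fun _ a => |a|)
      (fun j a b => abs_abs_sub_abs_le_abs_sub a b) z x
    have h0 : (A + B * diagonal d).mulVec (z - x) = 0 := by
      rw [← heq, hz, hx', sub_self]
    have hzx : z - x = 0 := by
      apply (H d hd).injective
      rw [h0, Matrix.mulVec_zero]
    exact sub_eq_zero.mp hzx
end

section
/- Let m = n, and suppose there exists a nonsingular matrix M ∈ R^{n×n} with σ_n(M A) > ‖M B‖₂. Then for every b ∈ R^n the equation A x − B|x| = b has a unique solution. -/
/-!
Multiplying by `M` turns the equation into `(MA)x - (MB)|x| = Mb`. Diagonalising `(MA)ᵀ(MA)` and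
`(MB)ᵀ(MB)` in orthonormal eigenbases gives `σ_n(MA) ‖u‖ ≤ ‖MA u‖` and `‖MB u‖ ≤ ‖MB‖₂ ‖u‖`.
Hence `MA` is invertible, and since `x ↦ |x|` is `1`-Lipschitz for the Euclidean norm, the map
`x ↦ (MA)⁻¹ (Mb + MB |x|)` is a contraction with constant `‖MB‖₂ / σ_n(MA) < 1`; the solutions
are its fixed points, so there is exactly one by Banach's fixed point theorem.
-/

open Matrix

/-- The `i`-th largest singular value of a real matrix (0-indexed),
defined as the `i`-th entry of the decreasingly sorted list of square roots
of the eigenvalues of `Aᴴ * A`; `0` if `i` is out of range. -/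
noncomputable def sv {m n : ℕ} (A : Matrix (Fin m) (Fin n) ℝ) (i : ℕ) : ℝ :=
  ((List.ofFn fun j : Fin n =>
      Real.sqrt ((Matrix.isHermitian_conjTranspose_mul_self A).eigenvalues j)).insertionSort
    (· ≥ ·)).getD i 0

/-- Euclidean norm of a vector. -/
noncomputable def vnorm {n : ℕ} (x : Fin n → ℝ) : ℝ := Real.sqrt (∑ i, x i ^ 2)

open scoped RealInnerProductSpace

namespace List

variable {α : Type*} [LinearOrder α] {n : ℕ}

theorem le_getD_zero_insertionSort_ofFn (f : Fin n → α) (j : Fin n) (d : α) :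
    f j ≤ ((ofFn f).insertionSort (· ≥ ·)).getD 0 d := by
  have hj : f j ∈ (ofFn f).insertionSort (· ≥ ·) :=
    (perm_insertionSort _ _).mem_iff.mpr (mem_ofFn.mpr ⟨j, rfl⟩)
  rw [getD_eq_getElem _ _ (length_pos_of_mem hj), ← head_eq_getElem (ne_nil_of_mem hj)]
  exact (pairwise_insertionSort _ _).rel_head hj

theorem getD_sub_one_insertionSort_ofFn_le (f : Fin n → α) (j : Fin n) (d : α) :
    ((ofFn f).insertionSort (· ≥ ·)).getD (n - 1) d ≤ f j := by
  have hj : f j ∈ (ofFn f).insertionSort (· ≥ ·) :=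
    (perm_insertionSort _ _).mem_iff.mpr (mem_ofFn.mpr ⟨j, rfl⟩)
  have hlen : n - 1 = ((ofFn f).insertionSort (· ≥ ·)).length - 1 := by simp
  rw [hlen, getD_eq_getElem _ _ (Nat.sub_one_lt_of_lt (length_pos_of_mem hj)),
    ← getLast_eq_getElem (ne_nil_of_mem hj)]
  exact (pairwise_insertionSort _ _).rel_getLast hj

end List

namespace Matrix.IsHermitian

variable {ι : Type*} [Fintype ι] [DecidableEq ι] {H : Matrix ι ι ℝ} (hH : H.IsHermitian)
  (x : EuclideanSpace ℝ ι)

theorem inner_toEuclideanLin_self_eq_sum :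
    ⟪x, toEuclideanLin H x⟫ = ∑ j, hH.eigenvalues j * ⟪hH.eigenvectorBasis j, x⟫ ^ 2 := by
  rw [← hH.eigenvectorBasis.sum_inner_mul_inner x (toEuclideanLin H x)]
  refine Finset.sum_congr rfl fun j _ => ?_
  have hj : toEuclideanLin H (hH.eigenvectorBasis j) =
      hH.eigenvalues j • hH.eigenvectorBasis j := by
    ext1
    simp [toLpLin_apply, mulVec_eigenvectorBasis]
  rw [← isSymmetric_toEuclideanLin_iff.mpr hH, hj, real_inner_smul_left, real_inner_comm]
  ring

theorem mul_norm_sq_le_inner_toEuclideanLin_self {c : ℝ} (hc : ∀ j, c ≤ hH.eigenvalues j) :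
    c * ‖x‖ ^ 2 ≤ ⟪x, toEuclideanLin H x⟫ := by
  rw [hH.inner_toEuclideanLin_self_eq_sum, ← hH.eigenvectorBasis.sum_sq_inner_right, Finset.mul_sum]
  gcongr with j
  exact hc j

theorem inner_toEuclideanLin_self_le_mul_norm_sq {c : ℝ} (hc : ∀ j, hH.eigenvalues j ≤ c) :
    ⟪x, toEuclideanLin H x⟫ ≤ c * ‖x‖ ^ 2 := by
  rw [hH.inner_toEuclideanLin_self_eq_sum, ← hH.eigenvectorBasis.sum_sq_inner_right, Finset.mul_sum]
  gcongr with j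
  exact hc j

end Matrix.IsHermitian

theorem Matrix.norm_toEuclideanLin_sq {m ι : Type*} [Fintype m] [Fintype ι] [DecidableEq ι]
    (C : Matrix m ι ℝ) (x : EuclideanSpace ℝ ι) :
    ‖toEuclideanLin C x‖ ^ 2 = ⟪x, toEuclideanLin (Cᴴ * C) x⟫ := by
  classical
  rw [← real_inner_self_eq_norm_sq, ← LinearMap.adjoint_inner_right,
    ← toEuclideanLin_conjTranspose_eq_adjoint]
  simp [toLpLin_apply]

section SingularValues

variable {m n : ℕ} (A : Matrix (Fin m) (Fin n) ℝ) (x : EuclideanSpace ℝ (Fin n))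

theorem sv_nonneg (i : ℕ) : 0 ≤ sv A i := by
  unfold sv
  set l := (List.ofFn fun j : Fin n =>
    √((isHermitian_conjTranspose_mul_self A).eigenvalues j)).insertionSort (· ≥ ·)
  rcases lt_or_ge i l.length with hi | hi
  · obtain ⟨j, hj⟩ :=
      List.mem_ofFn.mp ((List.perm_insertionSort _ _).mem_iff.mp (List.getElem_mem hi))
    rw [List.getD_eq_getElem _ _ hi, ← hj]
    exact Real.sqrt_nonneg _
  · rw [List.getD_eq_default _ _ hi]

theorem sqrt_eigenvalues_le_sv_zero (j : Fin n) :
    √((isHermitian_conjTranspose_mul_self A).eigenvalues j) ≤ sv A 0 := by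
  unfold sv
  exact List.le_getD_zero_insertionSort_ofFn
    (fun k => √((isHermitian_conjTranspose_mul_self A).eigenvalues k)) j 0

theorem sv_sub_one_le_sqrt_eigenvalues (j : Fin n) :
    sv A (n - 1) ≤ √((isHermitian_conjTranspose_mul_self A).eigenvalues j) := by
  unfold sv
  exact List.getD_sub_one_insertionSort_ofFn_le
    (fun k => √((isHermitian_conjTranspose_mul_self A).eigenvalues k)) j 0

theorem sv_sub_one_mul_norm_le_norm_toEuclideanLin :
    sv A (n - 1) * ‖x‖ ≤ ‖toEuclideanLin A x‖ := by
  have hH := isHermitian_conjTranspose_mul_self A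
  refine (sq_le_sq₀ (mul_nonneg (sv_nonneg A _) (norm_nonneg x)) (norm_nonneg _)).mp ?_
  rw [mul_pow, norm_toEuclideanLin_sq]
  refine hH.mul_norm_sq_le_inner_toEuclideanLin_self x fun j => ?_
  calc sv A (n - 1) ^ 2 ≤ √(hH.eigenvalues j) ^ 2 :=
        pow_le_pow_left₀ (sv_nonneg A _) (sv_sub_one_le_sqrt_eigenvalues A j) 2
    _ = hH.eigenvalues j :=
        Real.sq_sqrt ((posSemidef_conjTranspose_mul_self A).eigenvalues_nonneg j)

theorem norm_toEuclideanLin_le_sv_zero_mul :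
    ‖toEuclideanLin A x‖ ≤ sv A 0 * ‖x‖ := by
  have hH := isHermitian_conjTranspose_mul_self A
  refine (sq_le_sq₀ (norm_nonneg _) (mul_nonneg (sv_nonneg A _) (norm_nonneg x))).mp ?_
  rw [mul_pow, norm_toEuclideanLin_sq]
  refine hH.inner_toEuclideanLin_self_le_mul_norm_sq x fun j => ?_
  calc hH.eigenvalues j = √(hH.eigenvalues j) ^ 2 :=
        (Real.sq_sqrt ((posSemidef_conjTranspose_mul_self A).eigenvalues_nonneg j)).symm
    _ ≤ sv A 0 ^ 2 := pow_le_pow_left₀ (Real.sqrt_nonneg _) (sqrt_eigenvalues_le_sv_zero A j) 2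

end SingularValues

theorem existsUnique_sub_apply_eq {E : Type*} [NormedAddCommGroup E] [NormedSpace ℝ E]
    [FiniteDimensional ℝ E] (A B : E →ₗ[ℝ] E) {g : E → E} (hg : LipschitzWith 1 g) {σ τ : ℝ}
    (hτ : 0 ≤ τ) (hτσ : τ < σ) (hA : ∀ u, σ * ‖u‖ ≤ ‖A u‖) (hB : ∀ u, ‖B u‖ ≤ τ * ‖u‖) (b : E) :
    ∃! x, A x - B (g x) = b := by
  have hσ : 0 < σ := hτ.trans_lt hτσ
  have hinj : Function.Injective A := by
    refine (injective_iff_map_eq_zero A).mpr fun u hu => norm_le_zero_iff.mp ?_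
    have := hA u
    rw [hu, norm_zero] at this
    exact nonpos_of_mul_nonpos_right this hσ
  set e := LinearEquiv.ofInjectiveEndo A hinj
  have he : ∀ v, ‖e.symm v‖ ≤ σ⁻¹ * ‖v‖ := fun v =>
    (le_inv_mul_iff₀ hσ).mpr ((hA _).trans_eq (congrArg norm (e.apply_symm_apply v)))
  set F : E → E := fun x => e.symm (b + B (g x))
  have hF : ContractingWith ⟨τ / σ, div_nonneg hτ hσ.le⟩ F := by
    refine ⟨(div_lt_one hσ).mpr hτσ, LipschitzWith.of_dist_le_mul fun x y => ?_⟩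
    rw [dist_eq_norm, dist_eq_norm, ← map_sub, add_sub_add_left_eq_sub, ← map_sub]
    calc ‖e.symm (B (g x - g y))‖ ≤ σ⁻¹ * (τ * ‖g x - g y‖) :=
          (he _).trans (by gcongr; exact hB _)
      _ ≤ σ⁻¹ * (τ * ‖x - y‖) := by
          gcongr
          simpa [dist_eq_norm] using hg.dist_le_mul x y
      _ = τ / σ * ‖x - y‖ := by ring
  have hfix : ∀ x, A x - B (g x) = b ↔ Function.IsFixedPt F x := fun x => by
    rw [Function.IsFixedPt, LinearEquiv.symm_apply_eq, sub_eq_iff_eq_add, add_comm]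
    exact eq_comm
  exact (existsUnique_congr hfix).mpr
    ⟨hF.fixedPoint F, hF.fixedPoint_isFixedPt, fun y hy => hF.fixedPoint_unique hy⟩

theorem EuclideanSpace.lipschitzWith_one_abs {ι : Type*} [Fintype ι] :
    LipschitzWith 1 fun x : EuclideanSpace ℝ ι => WithLp.toLp 2 fun j => |x j| := by
  refine LipschitzWith.of_dist_le_mul fun x y => ?_
  rw [EuclideanSpace.dist_eq, EuclideanSpace.dist_eq, NNReal.coe_one, one_mul]
  gcongr with j
  simpa [Real.dist_eq] using abs_abs_sub_abs_le_abs_sub (x j) (y j)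

theorem existsUnique_mulVec_sub_mulVec_abs_eq {n : ℕ} (A B : Matrix (Fin n) (Fin n) ℝ)
    (h : sv B 0 < sv A (n - 1)) (b : Fin n → ℝ) :
    ∃! x : Fin n → ℝ, A *ᵥ x - B *ᵥ (fun j => |x j|) = b := by
  refine ((WithLp.equiv 2 (Fin n → ℝ)).symm.existsUnique_congr fun x => ?_).mpr
    (existsUnique_sub_apply_eq (toEuclideanLin A) (toEuclideanLin B)
      EuclideanSpace.lipschitzWith_one_abs (sv_nonneg B 0) h
      (sv_sub_one_mul_norm_le_norm_toEuclideanLin A) (norm_toEuclideanLin_le_sv_zero_mul B)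
      (WithLp.toLp 2 b))
  simp [toLpLin_apply, ← WithLp.toLp_sub]

/-- If `m = n` and there is a nonsingular `M` with `σ_n(M A) > ‖M B‖₂`, then for every `b`
the equation `A x − B|x| = b` has a unique solution.  (With 0-indexing, the smallest
singular value `σ_n` is `sv _ (n-1)` and the spectral norm is `sv _ 0`.) -/
theorem gave_unique_of_sv_square {n : ℕ} (A B M : Matrix (Fin n) (Fin n) ℝ)
    (hM : IsUnit M) (h : sv (M * A) (n - 1) > sv (M * B) 0) :
    ∀ b : Fin n → ℝ, ∃! x : Fin n → ℝ, A.mulVec x - B.mulVec (fun j => |x j|) = b := by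
  intro b
  refine (existsUnique_congr fun x => ?_).mpr
    (existsUnique_mulVec_sub_mulVec_abs_eq (M * A) (M * B) h (M *ᵥ b))
  rw [← (mulVec_injective_iff_isUnit.mpr hM).eq_iff, mulVec_sub, mulVec_mulVec, mulVec_mulVec]
end

section
/- Suppose there exists an index i such that |A_{i,j}| < B_{i,j} for all j. Then x = 0 is the unique solution of A x − B|x| = 0. -/
open Matrix

/-- If some row `i` satisfies `|A i j| < B i j` for all `j`, then `x = 0` is the unique
solution of `A x − B|x| = 0`. -/
theorem gave_zero_unique {m n : ℕ} (A B : Matrix (Fin m) (Fin n) ℝ)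
    (h : ∃ i, ∀ j, |A i j| < B i j) :
    ∃! x : Fin n → ℝ, A.mulVec x - B.mulVec (fun j => |x j|) = 0 := by
  obtain ⟨i, hi⟩ := h
  refine ⟨0, ?_, ?_⟩
  · simp [mulVec]
    ext k
    simp [mulVec, dotProduct]
  · intro x hx
    have hrow : ∑ j, (A i j * x j - B i j * |x j|) = 0 := by
      have := congrFun hx i
      simpa [mulVec, dotProduct, Finset.sum_sub_distrib] using this
    have hterm : ∀ j ∈ Finset.univ, A i j * x j - B i j * |x j| ≤ 0 := by
      intro j _
      have h1 : A i j * x j ≤ |A i j| * |x j| := by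
        calc A i j * x j ≤ |A i j * x j| := le_abs_self _
        _ = |A i j| * |x j| := abs_mul _ _
      have h2 : |A i j| * |x j| ≤ B i j * |x j| :=
        mul_le_mul_of_nonneg_right (hi j).le (abs_nonneg _)
      linarith
    have hzero := (Finset.sum_eq_zero_iff_of_nonpos hterm).mp hrow
    funext j
    by_contra hj
    have hxj : 0 < |x j| := abs_pos.mpr hj
    have h1 : A i j * x j ≤ |A i j| * |x j| := by
      calc A i j * x j ≤ |A i j * x j| := le_abs_self _
      _ = |A i j| * |x j| := abs_mul _ _
    have h2 : |A i j| * |x j| < B i j * |x j| :=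
      mul_lt_mul_of_pos_right (hi j) hxj
    have := hzero j (Finset.mem_univ j)
    linarith
end

section
/- For any A, B ∈ R^{m×n} and any x, y ∈ R^n, there exists a diagonal matrix D with diagonal entries in [−1,1] such that (A x − B|x|) − (A y − B|y|) = (A + B D)(x − y). -/
open Matrix

/-- Mean-value identity: for any `x, y` there is a diagonal matrix `D` with entries in
`[−1,1]` such that `(A x − B|x|) − (A y − B|y|) = (A + B D)(x − y)`. -/
theorem gave_mean_value {m n : ℕ} (A B : Matrix (Fin m) (Fin n) ℝ) (x y : Fin n → ℝ) :
    ∃ d : Fin n → ℝ, (∀ j, |d j| ≤ 1) ∧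
      (A.mulVec x - B.mulVec (fun j => |x j|)) - (A.mulVec y - B.mulVec (fun j => |y j|)) =
        (A + B * Matrix.diagonal d).mulVec (x - y) := by
  set d : Fin n → ℝ := fun j => if x j = y j then 0 else (|y j| - |x j|) / (x j - y j) with hd
  refine ⟨d, ?_, ?_⟩
  · intro j
    by_cases h : x j = y j
    · simp [hd, h]
    · have hne : x j - y j ≠ 0 := sub_ne_zero.mpr h
      simp only [hd, h, if_false, abs_div]
      rw [div_le_one (abs_pos.mpr hne)]
      calc |(|y j| - |x j|)| ≤ |y j - x j| := abs_abs_sub_abs_le_abs_sub _ _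
        _ = |x j - y j| := abs_sub_comm _ _
  · have key : ∀ j, d j * (x j - y j) = |y j| - |x j| := by
      intro j
      by_cases h : x j = y j
      · simp [hd, h]
      · have hne : x j - y j ≠ 0 := sub_ne_zero.mpr h
        simp only [hd, h, if_false]
        field_simp
    funext i
    simp only [Pi.sub_apply, mulVec, dotProduct, Matrix.add_apply, Matrix.mul_apply]
    have hterm : ∀ j, (A i j + ∑ k, B i k * Matrix.diagonal d k j) * (x j - y j)
        = A i j * x j - B i j * |x j| - (A i j * y j - B i j * |y j|) := by
      intro j
      have hdiag : ∑ k, B i k * Matrix.diagonal d k j = B i j * d j := by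
        rw [Finset.sum_eq_single j]
        · simp [Matrix.diagonal]
        · intro k _ hk; exact mul_eq_zero.mpr (Or.inr (Matrix.diagonal_apply_ne d hk))
        · simp
      rw [hdiag, add_mul, mul_assoc, key j]
      ring
    rw [Finset.sum_congr rfl fun j _ => hterm j]
    simp [Finset.sum_sub_distrib]
end

section
/- Suppose m ≤ n and there exists a subset S ⊂ {1,...,n} with |S| = m such that for every diagonal D with entries in [−1,1] the square matrix A_{:,S} + B_{:,S} D is nonsingular. Then for every b ∈ R^m, the equation A x − B|x| = b has a solution. -/
/-!
Put a solution `y` of the square system `A_{:,S} y − B_{:,S} |y| = b` on the coordinates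
`S` and zero elsewhere; then `|x|` vanishes off `S` too, so `A x − B |x| = b`.

For the square system, consider the homotopy `F_t y = A y − t B |y|`, `t ∈ [0, 1]`. Since
`|y| − |z| = D (y − z)` for a diagonal `D` with entries in `[−1, 1]`, every difference
`F_t y − F_t z` equals `(A + B D') (y − z)` with `D'` in the same cube, so compactness of the cube
makes all `F_t` antilipschitz with one constant. A surjective antilipschitz map stays surjective
under a perturbation with small Lipschitz constant (Banach fixed point), hence surjectivity
propagates from the linear map `F_0 = A` to `F_1` in finitely many steps of equal length.
-/

open Matrix Set Function
open scoped NNReal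

theorem AntilipschitzWith.surjective_add_of_lipschitzWith {E : Type*} [NormedAddCommGroup E]
    [CompleteSpace E] {f p : E → E} {K L : ℝ≥0} (hf : AntilipschitzWith K f)
    (hfs : Surjective f) (hp : LipschitzWith L p) (hKL : K * L < 1) :
    Surjective (f + p) := by
  intro b
  have hg : LipschitzWith K (surjInv hfs) := hf.to_rightInverse (rightInverse_surjInv hfs)
  have hΦ : ContractingWith (K * L) fun y => surjInv hfs (b - p y) :=
    ⟨hKL, by simpa [comp_def] using hg.comp ((LipschitzWith.const b).sub hp)⟩
  refine ⟨hΦ.fixedPoint, ?_⟩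
  have hfix : surjInv hfs (b - p hΦ.fixedPoint) = hΦ.fixedPoint := hΦ.fixedPoint_isFixedPt
  rw [Pi.add_apply, ← hfix, surjInv_eq hfs, hfix, sub_add_cancel]

theorem surjective_sub_of_antilipschitzWith_sub_smul {E : Type*} [NormedAddCommGroup E]
    [NormedSpace ℝ E] [CompleteSpace E] {f p : E → E} {K L : ℝ≥0} (hp : LipschitzWith L p)
    (hanti : ∀ t ∈ Icc (0 : ℝ) 1, AntilipschitzWith K (f - t • p)) (hf : Surjective f) :
    Surjective (f - p) := by
  obtain ⟨δ, hδ, hKLδ⟩ := exists_pos_mul_lt one_pos ((K * L : ℝ≥0) : ℝ)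
  have step : ∀ s ∈ Icc (0 : ℝ) 1, ∀ t, |t - s| ≤ δ →
      Surjective (f - s • p) → Surjective (f - t • p) := by
    intro s hs t hts hsurj
    have hpert : LipschitzWith (‖s - t‖₊ * L) ((s - t) • p) := (lipschitzWith_smul _).comp hp
    have hsmall : K * (‖s - t‖₊ * L) < 1 := by
      rw [← NNReal.coe_lt_coe]
      push_cast at hKLδ ⊢
      rw [Real.norm_eq_abs, abs_sub_comm]
      calc (K : ℝ) * (|t - s| * L) = K * L * |t - s| := by ring
        _ ≤ K * L * δ := by gcongr
        _ < 1 := hKLδ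
    convert (hanti s hs).surjective_add_of_lipschitzWith hsurj hpert hsmall using 1
    ext y
    simp only [Pi.sub_apply, Pi.add_apply, Pi.smul_apply, sub_smul]
    abel
  have reach : ∀ k : ℕ, ∀ t ∈ Icc (0 : ℝ) 1, t ≤ k * δ → Surjective (f - t • p) := by
    intro k
    induction k with
    | zero =>
      intro t ht htk
      obtain rfl : t = 0 := le_antisymm (by simpa using htk) ht.1
      simpa using hf
    | succ k ih =>
      intro t ht htk
      have hs : max (t - δ) 0 ∈ Icc (0 : ℝ) 1 :=
        ⟨le_max_right _ _, max_le (by linarith [ht.2]) zero_le_one⟩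
      refine step _ hs t ?_ (ih _ hs (max_le ?_ (by positivity)))
      · rw [abs_le]; constructor <;> cases max_cases (t - δ) 0 <;> linarith [ht.1]
      · push_cast at htk; linarith
  obtain ⟨k, hk⟩ := exists_nat_ge δ⁻¹
  simpa using reach k 1 ⟨zero_le_one, le_rfl⟩ (by rwa [← div_le_iff₀ hδ, one_div])

theorem Matrix.exists_norm_le_mul_norm_mulVec {X ι κ : Type*} [TopologicalSpace X] [Fintype ι]
    [Fintype κ] {s : Set X} (hs : IsCompact s) {M : X → Matrix κ ι ℝ} (hM : Continuous M)
    (hinj : ∀ x ∈ s, Injective (M x).mulVec) :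
    ∃ C : ℝ≥0, ∀ x ∈ s, ∀ u, ‖u‖ ≤ C * ‖M x *ᵥ u‖ := by
  have hcont : Continuous fun q : X × (ι → ℝ) => ‖M q.1 *ᵥ q.2‖ := by fun_prop
  have hpos : ∀ q ∈ s ×ˢ Metric.sphere (0 : ι → ℝ) 1, 0 < ‖M q.1 *ᵥ q.2‖ := by
    rintro ⟨x, u⟩ ⟨hx, hu⟩
    refine norm_pos_iff.2 fun h0 => ?_
    rw [← mulVec_zero (M x)] at h0
    rw [hinj x hx h0] at hu
    simp at hu
  obtain ⟨c, hc, hcle⟩ :=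
    (hs.prod (isCompact_sphere 0 1)).exists_forall_le' hcont.continuousOn hpos
  refine ⟨c⁻¹.toNNReal, fun x hx u => ?_⟩
  rcases eq_or_ne u 0 with rfl | hu
  · simp
  have hu' : 0 < ‖u‖ := norm_pos_iff.2 hu
  have hunit : ‖u‖⁻¹ • u ∈ Metric.sphere (0 : ι → ℝ) 1 := by
    rw [mem_sphere_zero_iff_norm, norm_smul, norm_inv, norm_norm, inv_mul_cancel₀ hu'.ne']
  have := hcle (x, ‖u‖⁻¹ • u) ⟨hx, hunit⟩
  rw [mulVec_smul, norm_smul, norm_inv, norm_norm] at this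
  rw [Real.coe_toNNReal _ (inv_nonneg.2 hc.le), ← div_eq_inv_mul, le_div_iff₀ hc]
  rwa [← div_eq_inv_mul, le_div_iff₀ hu', mul_comm] at this

theorem exists_abs_sub_abs_eq_mul (a b : ℝ) : ∃ d, |d| ≤ 1 ∧ |a| - |b| = d * (a - b) := by
  rcases eq_or_ne a b with rfl | hab
  · exact ⟨0, by simp⟩
  have hab' : a - b ≠ 0 := sub_ne_zero.2 hab
  refine ⟨(|a| - |b|) / (a - b), ?_, (div_mul_cancel₀ _ hab').symm⟩
  rw [abs_div, div_le_one (abs_pos.2 hab')]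
  exact abs_abs_sub_abs_le_abs_sub a b

theorem Matrix.exists_abs_sub_abs_eq_diagonal_mulVec {ι : Type*} [Fintype ι] [DecidableEq ι]
    (y z : ι → ℝ) :
    ∃ d : ι → ℝ, (∀ i, |d i| ≤ 1) ∧
      (fun i => |y i|) - (fun i => |z i|) = diagonal d *ᵥ (y - z) := by
  choose d hd heq using fun i => exists_abs_sub_abs_eq_mul (y i) (z i)
  exact ⟨d, hd, funext fun i => by simp [mulVec_diagonal, heq]⟩

theorem lipschitzWith_one_abs_pi {ι : Type*} [Fintype ι] :
    LipschitzWith 1 fun y : ι → ℝ => fun i => |y i| :=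
  LipschitzWith.of_dist_le_mul fun y z => by
    rw [NNReal.coe_one, one_mul, dist_pi_le_iff dist_nonneg]
    exact fun i => (abs_abs_sub_abs_le_abs_sub _ _).trans (dist_le_pi_dist y z i)

theorem Matrix.surjective_mulVec_sub_mulVec_abs {ι : Type*} [Fintype ι] [DecidableEq ι]
    {A B : Matrix ι ι ℝ}
    (h : ∀ d : ι → ℝ, (∀ i, |d i| ≤ 1) → Injective (A + B * diagonal d).mulVec) :
    Surjective fun y => A *ᵥ y - B *ᵥ fun i => |y i| := by
  have hball : ∀ d : ι → ℝ, d ∈ Metric.closedBall 0 1 ↔ ∀ i, |d i| ≤ 1 := by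
    simp [pi_norm_le_iff_of_nonneg]
  obtain ⟨C, hC⟩ := exists_norm_le_mul_norm_mulVec (isCompact_closedBall 0 1)
    (M := fun d => A + B * diagonal d) (by fun_prop) fun d hd => h d ((hball d).1 hd)
  have hp : LipschitzWith (‖B.mulVecLin.toContinuousLinearMap‖₊ * 1)
      fun y : ι → ℝ => B *ᵥ fun i => |y i| :=
    B.mulVecLin.toContinuousLinearMap.lipschitz.comp lipschitzWith_one_abs_pi
  have hanti : ∀ t ∈ Icc (0 : ℝ) 1,
      AntilipschitzWith C ((A *ᵥ ·) - t • fun y : ι → ℝ => B *ᵥ fun i => |y i|) := by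
    intro t ht
    refine AntilipschitzWith.of_le_mul_dist fun y z => ?_
    obtain ⟨d, hd, habs⟩ := exists_abs_sub_abs_eq_diagonal_mulVec y z
    have hsecant : (A *ᵥ y - t • B *ᵥ (fun i => |y i|)) - (A *ᵥ z - t • B *ᵥ (fun i => |z i|)) =
        (A + B * diagonal (-t • d)) *ᵥ (y - z) := by
      rw [add_mulVec, ← mulVec_mulVec, diagonal_smul, smul_mulVec, ← habs, mulVec_smul,
        mulVec_sub, mulVec_sub]
      module
    have htd : ∀ i, |(-t • d) i| ≤ 1 := fun i => by
      rw [Pi.smul_apply, smul_eq_mul, abs_mul, abs_neg, abs_of_nonneg ht.1]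
      exact mul_le_one₀ ht.2 (abs_nonneg _) (hd i)
    rw [dist_eq_norm, dist_eq_norm]
    simpa [hsecant] using hC _ ((hball _).2 htd) (y - z)
  have hA : Surjective (A *ᵥ ·) := by
    have hA0 : Injective (A *ᵥ ·) := by simpa using h 0 (by simp)
    exact LinearMap.injective_iff_surjective (f := A.mulVecLin).1 hA0
  exact surjective_sub_of_antilipschitzWith_sub_smul hp hanti hA

theorem Matrix.mulVec_extend_zero {R ι κ μ : Type*} [NonUnitalNonAssocSemiring R] [Fintype ι]
    [Fintype κ] (M : Matrix μ ι R) {g : κ → ι} (hg : Injective g) (w : κ → R) :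
    M *ᵥ extend g w 0 = M.submatrix id g *ᵥ w := by
  ext k
  refine (Fintype.sum_of_injective g hg _ _ (fun j hj => ?_) fun i => ?_).symm
  · simp [extend_apply' _ _ _ hj]
  · simp [hg.extend_apply]

theorem gave_solvable_of_submatrix_general {m n : ℕ}
    (A B : Matrix (Fin m) (Fin n) ℝ) (g : Fin m ↪ Fin n)
    (hg : ∀ d : Fin m → ℝ, (∀ i, |d i| ≤ 1) →
      Function.Bijective ((A.submatrix id g + B.submatrix id g * Matrix.diagonal d).mulVec)) :
    ∀ b : Fin m → ℝ, ∃ x : Fin n → ℝ, A.mulVec x - B.mulVec (fun j => |x j|) = b := by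
  intro b
  obtain ⟨y, hy⟩ := surjective_mulVec_sub_mulVec_abs (fun d hd => (hg d hd).1) b
  refine ⟨extend g y 0, ?_⟩
  have habs : (fun j => |extend g y 0 j|) = extend g (fun i => |y i|) 0 := by
    ext j
    rw [apply_extend abs]
    simp [comp_def, Pi.zero_def]
  rw [habs, mulVec_extend_zero A g.injective, mulVec_extend_zero B g.injective]
  exact hy

/-- If `m ≤ n` and there is a set of `m` columns (given by an injection `g : Fin m ↪ Fin n`)
such that the square submatrix `A_{:,S} + B_{:,S} D` is nonsingular for every diagonal `D`
with entries in `[−1,1]`, then `A x − B|x| = b` is solvable for every `b`. -/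
theorem gave_solvable_of_submatrix {m n : ℕ} (hmn : m ≤ n)
    (A B : Matrix (Fin m) (Fin n) ℝ) (g : Fin m ↪ Fin n)
    (hg : ∀ d : Fin m → ℝ, (∀ i, |d i| ≤ 1) →
      Function.Bijective ((A.submatrix id g + B.submatrix id g * Matrix.diagonal d).mulVec)) :
    ∀ b : Fin m → ℝ, ∃ x : Fin n → ℝ, A.mulVec x - B.mulVec (fun j => |x j|) = b :=
  gave_solvable_of_submatrix_general A B g hg
end
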